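/- In any 2-qBMG, if v1v2v3v4v5 is a chordless path in the underlying undirected graph with directed edges v1v2, v3v2 present (v2 is a sink on the path), then the directed edge v3v4 is present (and v4v3 is not). -/

import Mathlib

def QN1 {V : Type*} (E : V → V → Prop) : Prop :=
  ∀ u v, u ≠ v → ¬ E u v → ¬ E v u → ¬ ∃ w t, E u t ∧ E v w ∧ E t w

def QN2 {V : Type*} (E : V → V → Prop) : Prop :=
  ∀ u v w t, E u v → E v w → E w t → E u t

def QN3 {V : Type*} (E : V → V → Prop) : Prop :=
  ∀ u v, (∃ w, E u w ∧ E v w) → (∀ w, E u w → E v w) ∨ (∀ w, E v w → E u w)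

def QBip {V : Type*} (c : V → Bool) (E : V → V → Prop) : Prop :=
  ∀ u v, E u v → c u ≠ c v

/-- A 2-colored quasi best match graph: bipartite digraph satisfying (N1), (N2), (N3). -/
def IsQBMG {V : Type*} (c : V → Bool) (E : V → V → Prop) : Prop :=
  QBip c E ∧ QN1 E ∧ QN2 E ∧ QN3 E

/-- Adjacency in the underlying undirected graph. -/
def QAdj {V : Type*} (E : V → V → Prop) (u v : V) : Prop := E u v ∨ E v u

theorem QAdj.symm {V : Type*} {E : V → V → Prop} {u v : V} (h : QAdj E u v) : QAdj E v u :=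
  Or.symm h

theorem QN1.qAdj_of_edges {V : Type*} {E : V → V → Prop} (hE : QN1 E) {u v t w : V}
    (huv : u ≠ v) (hut : E u t) (hvw : E v w) (htw : E t w) : QAdj E u v := by
  by_contra hnadj
  exact hE u v huv (fun h => hnadj (.inl h)) (fun h => hnadj (.inr h)) ⟨w, t, hut, hvw, htw⟩

theorem P5_sink_case_forces_edge_general {V : Type*} (c : V → Bool) (E : V → V → Prop)
    (h : IsQBMG c E) (v1 v2 v3 v4 v5 : V)
    (hne : [v1, v2, v3, v4, v5].Pairwise (· ≠ ·))
    (a34 : QAdj E v3 v4)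
    (n14 : ¬ QAdj E v1 v4)
    (h12 : E v1 v2) (h32 : E v3 v2) :
    E v3 v4 ∧ ¬ E v4 v3 := by
  have hv14 : v1 ≠ v4 := by
    simp only [List.pairwise_cons, List.mem_cons, List.not_mem_nil] at hne
    exact hne.1 v4 (by simp)
  have h43 : ¬ E v4 v3 := fun h43 =>
    n14 (h.2.1.qAdj_of_edges hv14.symm h43 h12 h32).symm
  exact ⟨a34.resolve_right h43, h43⟩

theorem P5_sink_case_forces_edge {V : Type*} (c : V → Bool) (E : V → V → Prop)
    (h : IsQBMG c E) (v1 v2 v3 v4 v5 : V)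
    (hne : [v1, v2, v3, v4, v5].Pairwise (· ≠ ·))
    (a12 : QAdj E v1 v2) (a23 : QAdj E v2 v3) (a34 : QAdj E v3 v4) (a45 : QAdj E v4 v5)
    (n13 : ¬ QAdj E v1 v3) (n14 : ¬ QAdj E v1 v4) (n15 : ¬ QAdj E v1 v5)
    (n24 : ¬ QAdj E v2 v4) (n25 : ¬ QAdj E v2 v5) (n35 : ¬ QAdj E v3 v5)
    (h12 : E v1 v2) (h32 : E v3 v2) :
    E v3 v4 ∧ ¬ E v4 v3 :=
  P5_sink_case_forces_edge_general c E h v1 v2 v3 v4 v5 hne a34 n14 h12 h32
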